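/- Every homeomorphism f : X → X of a compact metric space X that has the pseudo-orbit tracing property and admits a positively expansive Borel probability measure has positive topological entropy. -/

import Mathlib

open MeasureTheory Filter Set ENNReal

/-- `Φ_δ(x) = {y : d(f^i x, f^i y) ≤ δ for all i ∈ ℕ}`. -/
def phiSet {X : Type*} [MetricSpace X] (f : X → X) (δ : ℝ) (x : X) : Set X :=
  {y | ∀ i : ℕ, dist (f^[i] x) (f^[i] y) ≤ δ}

/-- A Borel probability measure is positively expansive if there is an
expansivity constant `e > 0` with `μ (Φ_e x) = 0` for all `x`. -/
def IsPositivelyExpansive {X : Type*} [MetricSpace X] [MeasurableSpace X]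
    (f : X → X) (μ : Measure X) : Prop :=
  ∃ e : ℝ, 0 < e ∧ ∀ x : X, μ (phiSet f e x) = 0

/-- `M_f(n, ε)`: the minimal number of `ε`-balls in the metric
`(x, y) ↦ max_{0 ≤ i ≤ n} d(f^i x, f^i y)` needed to cover `X`. -/
noncomputable def coverNum {X : Type*} [MetricSpace X] (f : X → X) (n : ℕ) (ε : ℝ) : ℕ :=
  sInf {k : ℕ | ∃ S : Finset X, S.card = k ∧
    ∀ x : X, ∃ y ∈ S, ∀ i ≤ n, dist (f^[i] y) (f^[i] x) < ε}

/-- The topological entropy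
`h(f) = lim_{ε → 0} limsup_{n → ∞} (1/n) log M_f(n, ε)`; since the inner
`limsup` is monotone as `ε` decreases, the limit is the supremum over `ε > 0`. -/
noncomputable def topEntropy {X : Type*} [MetricSpace X] (f : X → X) : ℝ≥0∞ :=
  ⨆ (ε : ℝ) (_ : 0 < ε),
    Filter.atTop.limsup fun n : ℕ => ENNReal.ofReal (Real.log (coverNum f n ε) / n)

/-- The `i`-th iterate of a homeomorphism, `i ∈ ℤ`. -/
noncomputable def iterZ {X : Type*} [TopologicalSpace X] (f : X ≃ₜ X) (i : ℤ) (x : X) : X :=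
  if 0 ≤ i then (⇑f)^[i.toNat] x else (⇑f.symm)^[(-i).toNat] x

/-- The homeomorphism `f` has the pseudo-orbit tracing property: for all `ε > 0`
there is `δ > 0` such that every `δ`-pseudo-orbit is `ε`-shadowed. -/
def POTP {X : Type*} [MetricSpace X] (f : X ≃ₜ X) : Prop :=
  ∀ ε > (0 : ℝ), ∃ δ > (0 : ℝ), ∀ x : ℤ → X,
    (∀ i : ℤ, dist (f (x i)) (x (i + 1)) ≤ δ) →
    ∃ y : X, ∀ i : ℤ, dist (iterZ f i y) (x i) ≤ ε

/-! Let `e` be an expansivity constant and `δ` a shadowing constant for `e / 8`. Positive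
expansiveness makes μ-almost every orbit get `e / 2`-far from any given orbit at arbitrarily late
times, so there are families of any finite size of pairwise such points; by compactness two of them
also come `δ / 3`-close infinitely often. Following these two orbits between two close times at
which the first orbit almost returns gives two orbit segments of a common length `P` that can be
concatenated freely into `δ`-pseudo-orbits and that separate in between. Shadowing all `2 ^ k`
concatenations of `k` segments gives `2 ^ k` orbits that are `e / 4`-separated up to time `k P`,
so `h(f) ≥ log 2 / P`. -/

section Compact

variable {X : Type*} [MetricSpace X] [CompactSpace X]

lemma exists_card_forall_exists_ne_dist_lt {ε : ℝ} (hε : 0 < ε) :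
    ∃ N : ℕ, ∀ v : Fin N → X, ∃ i j, i ≠ j ∧ dist (v i) (v j) < ε := by
  obtain ⟨t, -, ht⟩ := isCompact_univ.elim_nhds_subcover (fun y : X => Metric.ball y (ε / 2))
    fun y _ => Metric.ball_mem_nhds y (half_pos hε)
  refine ⟨t.card + 1, fun v => ?_⟩
  have hcenter : ∀ i, ∃ c ∈ t, v i ∈ Metric.ball c (ε / 2) := fun i => by
    simpa using ht (mem_univ (v i))
  choose c hct hvc using hcenter
  obtain ⟨i, -, j, -, hij, hc⟩ :=
    Finset.exists_ne_map_eq_of_card_lt_of_maps_to (s := Finset.univ) (f := c) (by simp)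
      fun i _ => hct i
  refine ⟨i, j, hij, ?_⟩
  have hi := hvc i
  have hj := hvc j
  rw [Metric.mem_ball, hc] at hi
  rw [Metric.mem_ball] at hj
  linarith [dist_triangle_right (v i) (v j) (c j)]

lemma exists_lt_dist_lt (u : ℕ → X) {ε : ℝ} (hε : 0 < ε) :
    ∃ a b, a < b ∧ dist (u a) (u b) < ε := by
  obtain ⟨N, hN⟩ := exists_card_forall_exists_ne_dist_lt (X := X) hε
  obtain ⟨i, j, hij, hd⟩ := hN fun i => u i
  rcases hij.lt_or_gt with h | h
  exacts [⟨i, j, h, hd⟩, ⟨j, i, h, by rwa [dist_comm]⟩]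

end Compact

section Entropy

variable {X : Type*} [MetricSpace X]

def bowenBall (f : X → X) (n : ℕ) (ε : ℝ) (y : X) : Set X :=
  {x | ∀ i ≤ n, dist (f^[i] y) (f^[i] x) < ε}

lemma isOpen_bowenBall {f : X → X} (hf : Continuous f) (n : ℕ) (ε : ℝ) (y : X) :
    IsOpen (bowenBall f n ε y) := by
  simp only [bowenBall, ofPred_forall]
  exact (Set.finite_le_nat n).isOpen_biInter fun i _ =>
    isOpen_lt (continuous_const.dist (hf.iterate i)) continuous_const

lemma mem_bowenBall_self (f : X → X) (n : ℕ) {ε : ℝ} (hε : 0 < ε) (y : X) :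
    y ∈ bowenBall f n ε y := fun i _ => by simpa using hε

lemma exists_finset_card_eq_coverNum [CompactSpace X] {f : X → X} (hf : Continuous f) (n : ℕ)
    {ε : ℝ} (hε : 0 < ε) :
    ∃ S : Finset X, S.card = coverNum f n ε ∧ ∀ x, ∃ y ∈ S, x ∈ bowenBall f n ε y := by
  suffices hne : {k | ∃ S : Finset X, S.card = k ∧ ∀ x, ∃ y ∈ S, x ∈ bowenBall f n ε y}.Nonempty by
    obtain ⟨S, hS, hcover⟩ := Nat.sInf_mem hne
    exact ⟨S, hS, hcover⟩
  obtain ⟨S, -, hS⟩ := isCompact_univ.elim_nhds_subcover (bowenBall f n ε)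
    fun y _ => (isOpen_bowenBall hf n ε y).mem_nhds (mem_bowenBall_self f n hε y)
  exact ⟨S.card, S, rfl, fun x => by simpa [bowenBall] using hS (mem_univ x)⟩

lemma card_le_coverNum [CompactSpace X] {ι : Type*} [Fintype ι] {f : X → X} (hf : Continuous f)
    {n : ℕ} {ε : ℝ} (hε : 0 < ε) (Y : ι → X)
    (hY : Pairwise fun a b => ∃ i ≤ n, 2 * ε ≤ dist (f^[i] (Y a)) (f^[i] (Y b))) :
    Fintype.card ι ≤ coverNum f n ε := by
  obtain ⟨S, hScard, hS⟩ := exists_finset_card_eq_coverNum hf n hε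
  choose c hcS hc using fun a => hS (Y a)
  rw [← hScard, ← Finset.card_univ]
  refine Finset.card_le_card_of_injOn c (fun a _ => hcS a) fun a _ b _ hab => ?_
  by_contra hne
  obtain ⟨i, hi, hfar⟩ := hY hne
  have ha := hc a i hi
  have hb := hc b i hi
  rw [hab] at ha
  linarith [dist_triangle_left (f^[i] (Y a)) (f^[i] (Y b)) (f^[i] (c b))]

lemma ofReal_log_div_le_topEntropy {f : X → X} {ε : ℝ} (hε : 0 < ε) {c P : ℕ} (hc : 0 < c)
    (hP : 0 < P) (h : ∀ k, c ^ k ≤ coverNum f (k * P) ε) :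
    ENNReal.ofReal (Real.log c / P) ≤ topEntropy f := by
  refine le_trans ?_ (le_iSup₂ (f := fun ε (_ : 0 < ε) =>
    atTop.limsup fun n : ℕ => ENNReal.ofReal (Real.log (coverNum f n ε) / n)) ε hε)
  refine le_limsup_of_frequently_le (frequently_atTop.2 fun K => ⟨(K + 1) * P, ?_, ?_⟩)
  · nlinarith
  · apply ENNReal.ofReal_le_ofReal
    have hpow : ((c ^ (K + 1) : ℕ) : ℝ) ≤ coverNum f ((K + 1) * P) ε := by exact_mod_cast h (K + 1)
    calc Real.log c / P = Real.log ((c ^ (K + 1) : ℕ) : ℝ) / ((K + 1) * P : ℕ) := by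
          rw [Nat.cast_pow, Real.log_pow]
          push_cast
          field_simp
      _ ≤ Real.log (coverNum f ((K + 1) * P) ε) / ((K + 1) * P : ℕ) := by
          gcongr

end Entropy

lemma exists_pairwise_of_forall_ae {α : Type*} [MeasurableSpace α] {μ : Measure α} [NeZero μ]
    {R : α → α → Prop} (hR : ∀ x y, R x y → R y x) (h : ∀ x, ∀ᵐ y ∂μ, R x y) (N : ℕ) :
    ∃ z : Fin N → α, Pairwise fun i j => R (z i) (z j) := by
  induction N with
  | zero => exact ⟨Fin.elim0, fun i => i.elim0⟩
  | succ N ih =>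
    obtain ⟨z, hz⟩ := ih
    obtain ⟨y, hy⟩ := (ae_all_iff.2 fun i => h (z i)).exists
    refine ⟨Fin.cons y z, fun i j hij => ?_⟩
    cases i using Fin.cases <;> cases j using Fin.cases
    · exact absurd rfl hij
    · exact hR _ _ (hy _)
    · exact hy _
    · exact hz fun h => hij (congrArg Fin.succ h)

section Orbits

variable {X : Type*} [MetricSpace X]

/-- Near a point `y` whose orbit stays `e / 2`-close to that of `x` from time `k` on, the points
with the same property that are also in the Bowen ball `bowenBall f k e y` lie in `Φ_e(y)`. -/
lemma ae_frequently_dist_gt [SecondCountableTopology X] [MeasurableSpace X] {f : X → X}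
    (hf : Continuous f) {μ : Measure X} {e : ℝ} (he : 0 < e)
    (hΦ : ∀ x, μ (phiSet f e x) = 0) (x : X) :
    ∀ᵐ y ∂μ, ∃ᶠ n in atTop, e / 2 < dist (f^[n] x) (f^[n] y) := by
  simp only [Filter.Frequently, not_lt, ae_iff, not_not, eventually_atTop, ofPred_exists]
  refine measure_iUnion_null fun k => measure_null_of_locally_null _ fun y hy =>
    ⟨_ ∩ bowenBall f k e y, inter_mem_nhdsWithin _
      ((isOpen_bowenBall hf k e y).mem_nhds (mem_bowenBall_self f k he y)),
      measure_mono_null (fun y' hy' => ?_) (hΦ y)⟩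
  obtain ⟨htail, hball⟩ := hy'
  intro i
  rcases le_or_gt k i with hki | hik
  · linarith [dist_triangle_left (f^[i] y) (f^[i] y') (f^[i] x), hy i hki, htail i hki]
  · exact (hball i hik.le).le

lemma exists_frequently_dist_lt {N : ℕ} {ε : ℝ}
    (hN : ∀ v : Fin N → X, ∃ i j, i ≠ j ∧ dist (v i) (v j) < ε) (f : X → X) (z : Fin N → X) :
    ∃ i j, i ≠ j ∧ ∃ᶠ n in atTop, dist (f^[n] (z i)) (f^[n] (z j)) < ε := by
  by_contra! h
  have hsep : ∀ᶠ n in atTop, ∀ i j, i ≠ j → ε ≤ dist (f^[n] (z i)) (f^[n] (z j)) := by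
    simp only [eventually_all]
    exact fun i j hij => by simpa using h i j hij
  obtain ⟨n, hn⟩ := hsep.exists
  obtain ⟨i, j, hij, hd⟩ := hN fun i => f^[n] (z i)
  exact (hn i j hij).not_gt hd

lemma exists_lt_lt_dist_lt [CompactSpace X] (u : ℕ → X) {C F : ℕ → Prop}
    (hC : ∃ᶠ n in atTop, C n) (hF : ∃ᶠ n in atTop, F n) {ε : ℝ} (hε : 0 < ε) :
    ∃ t₁ s t₂, t₁ < s ∧ s < t₂ ∧ C t₁ ∧ F s ∧ C t₂ ∧ dist (u t₁) (u t₂) < ε := by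
  have hnext : ∀ t, ∃ t', C t' ∧ ∃ s, t < s ∧ s < t' ∧ F s := fun t => by
    obtain ⟨s, hts, hs⟩ := frequently_atTop.1 hF (t + 1)
    obtain ⟨t', hst', ht'⟩ := frequently_atTop.1 hC (s + 1)
    exact ⟨t', ht', s, by omega, by omega, hs⟩
  choose next hC_next s hs using hnext
  let τ : ℕ → ℕ := fun k => next^[k + 1] 0
  have hτ : ∀ k, τ (k + 1) = next (τ k) := fun k => Function.iterate_succ_apply' next (k + 1) 0
  have hmono : StrictMono τ := strictMono_nat_of_lt_succ fun k => by
    rw [hτ]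
    exact (hs _).1.trans (hs _).2.1
  obtain ⟨a, b, hab, hd⟩ := exists_lt_dist_lt (u ∘ τ) hε
  have hτ_C : ∀ k, C (τ k) := fun k => by
    simp only [τ, Function.iterate_succ_apply']
    exact hC_next _
  refine ⟨τ a, s (τ a), τ b, (hs _).1, ?_, hτ_C a, (hs _).2.2, hτ_C b, hd⟩
  calc s (τ a) < τ (a + 1) := hτ a ▸ (hs _).2.1
    _ ≤ τ b := hmono.monotone hab

end Orbits

def concatOrbit {X ι : Type*} (f : X → X) (P : ℕ) (p : ι → X) (ω : ℤ → ι) (i : ℤ) : X :=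
  f^[(i % P).toNat] (p (ω (i / P)))

lemma concatOrbit_mul_add {X ι : Type*} (f : X → X) {P s : ℕ} (hs : s < P) (p : ι → X)
    (ω : ℤ → ι) (q : ℤ) :
    concatOrbit f P p ω (q * P + s) = f^[s] (p (ω q)) := by
  have hP : (0 : ℤ) < P := by omega
  obtain ⟨hdiv, hmod⟩ := (Int.ediv_emod_unique (a := q * P + s) (q := q) (r := s) hP).2
    ⟨by ring, by positivity, by exact_mod_cast hs⟩
  simp [concatOrbit, hdiv, hmod]

section Horseshoe

variable {X : Type*} [MetricSpace X]

lemma exists_horseshoe [CompactSpace X] {f : X → X} {x y : X} {η r : ℝ} (hη : 0 < η)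
    (hclose : ∃ᶠ n in atTop, dist (f^[n] x) (f^[n] y) < η)
    (hfar : ∃ᶠ n in atTop, r < dist (f^[n] x) (f^[n] y)) :
    ∃ (p : Bool → X) (P s : ℕ), s < P ∧ (∀ a b, dist (f^[P] (p a)) (p b) < 3 * η) ∧
      Pairwise fun a b => r < dist (f^[s] (p a)) (f^[s] (p b)) := by
  obtain ⟨t₁, s, t₂, h₁, h₂, hc₁, hs, hc₂, hrec⟩ :=
    exists_lt_lt_dist_lt (fun n => f^[n] x) hclose hfar hη
  have hshift : ∀ {m} z, t₁ ≤ m → f^[m - t₁] (f^[t₁] z) = f^[m] z := fun z h => by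
    rw [← Function.iterate_add_apply, Nat.sub_add_cancel h]
  refine ⟨fun b => f^[t₁] (cond b x y), t₂ - t₁, s - t₁, by omega, fun a b => ?_, ?_⟩
  · have ha : dist (f^[t₂] (cond a x y)) (f^[t₂] x) < η := by
      cases a <;> simp [hη, dist_comm, hc₂]
    have hb : dist (f^[t₁] x) (f^[t₁] (cond b x y)) < η := by
      cases b <;> simp [hη, hc₁]
    simp only [hshift _ (h₁.trans h₂).le]
    linarith [dist_triangle4 (f^[t₂] (cond a x y)) (f^[t₂] x) (f^[t₁] x) (f^[t₁] (cond b x y)),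
      dist_comm (f^[t₂] x) (f^[t₁] x)]
  · intro a b hab
    simp only [hshift _ h₁.le]
    cases a <;> cases b <;> simp_all [dist_comm]

lemma dist_concatOrbit_succ_le {ι : Type*} {f : X → X} {P : ℕ} (hP : 0 < P) {p : ι → X}
    {δ : ℝ} (hseam : ∀ a b, dist (f^[P] (p a)) (p b) ≤ δ) (ω : ℤ → ι) (i : ℤ) :
    dist (f (concatOrbit f P p ω i)) (concatOrbit f P p ω (i + 1)) ≤ δ := by
  obtain ⟨q, r, hr, rfl⟩ : ∃ (q : ℤ) (r : ℕ), r < P ∧ i = q * P + r :=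
    have hP' : (0 : ℤ) < P := by exact_mod_cast hP
    have := Int.emod_nonneg i hP'.ne'
    have := Int.emod_lt_of_pos i hP'
    have := Int.ediv_mul_add_emod i P
    ⟨i / P, (i % P).toNat, by omega, by omega⟩
  rw [concatOrbit_mul_add f hr, ← Function.iterate_succ_apply' f]
  rcases (Nat.succ_le_of_lt hr).lt_or_eq with hlt | heq
  · rw [show q * P + r + 1 = q * P + ((r + 1 : ℕ) : ℤ) by push_cast; ring,
      concatOrbit_mul_add f hlt, dist_self]
    exact dist_nonneg.trans (hseam (ω q) (ω q))
  · rw [show q * P + r + 1 = (q + 1) * P + ((0 : ℕ) : ℤ) by rw [← heq]; push_cast; ring,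
      concatOrbit_mul_add f hP, heq]
    exact hseam _ _

lemma iterZ_natCast {f : X ≃ₜ X} (n : ℕ) (x : X) : iterZ f n x = f^[n] x := by
  simp [iterZ]

lemma pow_card_le_coverNum [CompactSpace X] {ι : Type*} [Fintype ι] [Inhabited ι] (f : X ≃ₜ X)
    {ε δ : ℝ} (hε : 0 < ε)
    (hshadow : ∀ x : ℤ → X, (∀ i, dist (f (x i)) (x (i + 1)) ≤ δ) →
      ∃ y, ∀ i, dist (iterZ f i y) (x i) ≤ ε)
    {p : ι → X} {P s : ℕ} (hs : s < P) (hseam : ∀ a b, dist (f^[P] (p a)) (p b) ≤ δ)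
    (hfar : Pairwise fun a b => 4 * ε < dist (f^[s] (p a)) (f^[s] (p b))) (k : ℕ) :
    Fintype.card ι ^ k ≤ coverNum f (k * P) ε := by
  let word : (Fin k → ι) → ℤ → ι := fun w q => if h : q.toNat < k then w ⟨q.toNat, h⟩ else default
  have hword : ∀ w (j : Fin k), word w j = w j := fun w j => by simp [word]
  choose Y hY using fun w =>
    hshadow _ (dist_concatOrbit_succ_le (Nat.zero_lt_of_lt hs) hseam (word w))
  have hsep : Pairwise fun w w' => ∃ i ≤ k * P, 2 * ε ≤ dist (f^[i] (Y w)) (f^[i] (Y w')) := by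
    intro w w' hne
    obtain ⟨j, hj⟩ := Function.ne_iff.1 hne
    have hjk : j * P + s ≤ k * P := by nlinarith [j.isLt]
    refine ⟨j * P + s, hjk, ?_⟩
    have hpos : ∀ w, dist (f^[j * P + s] (Y w)) (f^[s] (p (w j))) ≤ ε := fun w => by
      have h := hY w (j * P + s : ℕ)
      rw [iterZ_natCast] at h
      simpa [concatOrbit_mul_add _ hs, hword] using h
    linarith [hfar hj, hpos w, hpos w', dist_triangle4 (f^[s] (p (w j)))
      (f^[j * P + s] (Y w)) (f^[j * P + s] (Y w')) (f^[s] (p (w' j))),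
      dist_comm (f^[s] (p (w j))) (f^[j * P + s] (Y w))]
  simpa using card_le_coverNum f.continuous hε Y hsep

end Horseshoe

theorem entropy_pos_of_potp_of_positivelyExpansive_general
    {X : Type*} [MetricSpace X] [CompactSpace X] [MeasurableSpace X]
    (f : X ≃ₜ X) (hPOTP : POTP f)
    (μ : Measure X) [IsProbabilityMeasure μ]
    (hμ : IsPositivelyExpansive (⇑f) μ) :
    0 < topEntropy (⇑f) := by
  obtain ⟨e, he, hΦ⟩ := hμ
  obtain ⟨δ, hδ, hshadow⟩ := hPOTP (e / 8) (by positivity)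
  obtain ⟨N, hN⟩ := exists_card_forall_exists_ne_dist_lt (X := X) (by positivity : 0 < δ / 3)
  obtain ⟨z, hz⟩ := exists_pairwise_of_forall_ae (fun x y h => by simpa only [dist_comm] using h)
    (ae_frequently_dist_gt f.continuous he hΦ) N
  obtain ⟨i, j, hij, hclose⟩ := exists_frequently_dist_lt hN f z
  obtain ⟨p, P, s, hs, hseam, hfar⟩ := exists_horseshoe (by positivity) hclose (hz hij)
  have hP : 0 < P := Nat.zero_lt_of_lt hs
  have hcover := pow_card_le_coverNum f (by positivity) hshadow hs
    (fun a b => by linarith [hseam a b]) (fun a b hab => by linarith [hfar hab])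
  refine lt_of_lt_of_le ?_ (ofReal_log_div_le_topEntropy (by positivity) (by simp) hP hcover)
  simp only [Fintype.card_bool, Nat.cast_ofNat, ENNReal.ofReal_pos]
  exact div_pos (Real.log_pos one_lt_two) (by exact_mod_cast hP)

/-- Every homeomorphism of a compact metric space with the POTP admitting a
positively expansive Borel probability measure has positive topological
entropy. -/
theorem entropy_pos_of_potp_of_positivelyExpansive
    {X : Type*} [MetricSpace X] [CompactSpace X] [MeasurableSpace X] [BorelSpace X]
    (f : X ≃ₜ X) (hPOTP : POTP f)
    (μ : Measure X) [IsProbabilityMeasure μ]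
    (hμ : IsPositivelyExpansive (⇑f) μ) :
    0 < topEntropy (⇑f) :=
  entropy_pos_of_potp_of_positivelyExpansive_general f hPOTP μ hμ
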